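/- Let n ≥ 2, α ∈ [−1, 0), R > 0, T > 0, and define on the region { x ∈ ℝⁿ : |x|² < R² T^{2/(2−nα)} } the function Ψ(x,t) = C_α ( (t+T)/(R² T^{2/(2−nα)} − |x|²) )^{1/α}, where C_α > 0 satisfies C_α^α = 2 n^{α−1}(n − 2/α). Then at every point (x,t) with |x|² < R² T^{2/(2−nα)} and t ≥ 0 one has ∂_t Ψ − Σ_i ∂_{x_i}( n^{α−1} Ψ^{−α} ∂_{x_i} Ψ ) = (1/α) · (2/(2−nα)) · ( R² T^{2/(2−nα)} / (R² T^{2/(2−nα)} − |x|²) ) · Ψ/(t+T), which is ≤ 0 since α < 0; in particular Ψ is a subsolution of the porous medium equation on the interior of its support. -/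

import Mathlib

/-- Partial derivative in the `i`-th coordinate direction. -/
noncomputable def pd {n : ℕ} (i : Fin n) (f : EuclideanSpace ℝ (Fin n) → ℝ)
    (x : EuclideanSpace ℝ (Fin n)) : ℝ :=
  fderiv ℝ f x (EuclideanSpace.single i (1 : ℝ))

/-!
Where `G = M - ‖x‖² > 0`, the barrier separates variables: `Ψ = C (t + T)^(1/α) G^(-1/α)`.
Hence `Ψ^(-α) = C^(-α) G / (t + T)` is linear in `G`, the flux `n^(α-1) Ψ^(-α) ∇Ψ` is a
constant multiple of `G^(-1/α) x`, and its divergence `n G^(-1/α) + (2/α) G^(-1/α-1) ‖x‖²` is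
elementary. The normalisation `C^α = 2 n^(α-1) (n - 2/α)` fixes that constant so that,
using `‖x‖² = M - G`, the difference with `∂ₜΨ = Ψ / (α (t + T))` collapses to the multiple
`(2 / (2 - nα)) (M / G)` of `∂ₜΨ`.
-/

open Real Filter Topology

theorem eventually_norm_sq_lt {E : Type*} [SeminormedAddGroup E] {M : ℝ} {x : E}
    (hx : ‖x‖ ^ 2 < M) : ∀ᶠ y in 𝓝 x, ‖y‖ ^ 2 < M :=
  (isOpen_lt (continuous_norm.pow 2) continuous_const).eventually_mem hx

theorem hasFDerivAt_rpow_sub_norm_sq {E : Type*} [NormedAddCommGroup E] [InnerProductSpace ℝ E]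
    {M p : ℝ} {y : E} (hy : ‖y‖ ^ 2 < M) :
    HasFDerivAt (fun z : E => (M - ‖z‖ ^ 2) ^ p)
      ((-2 * p * (M - ‖y‖ ^ 2) ^ (p - 1)) • innerSL ℝ y) y := by
  convert ((hasStrictFDerivAt_norm_sq y).hasFDerivAt.const_sub M).rpow_const
    (p := p) (Or.inl (sub_pos.2 hy).ne') using 1
  ext v
  simp
  ring

section Barrier

variable {E : Type*} [Norm E] {C T M α s t : ℝ} {x : E}

noncomputable def pmeBarrier (C T M α : ℝ) (x : E) (s : ℝ) : ℝ :=
  C * ((s + T) / (M - ‖x‖ ^ 2)) ^ (1 / α)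

theorem pmeBarrier_pos (hC : 0 < C) (hs : 0 < s + T) (hx : ‖x‖ ^ 2 < M) :
    0 < pmeBarrier C T M α x s := by
  have := sub_pos.2 hx
  unfold pmeBarrier
  positivity

theorem pmeBarrier_eq_mul_rpow (hs : 0 ≤ s + T) (hx : ‖x‖ ^ 2 ≤ M) :
    pmeBarrier C T M α x s = C * (s + T) ^ (1 / α) * (M - ‖x‖ ^ 2) ^ (-(1 / α)) := by
  rw [pmeBarrier, div_rpow hs (sub_nonneg.2 hx), rpow_neg (sub_nonneg.2 hx), div_eq_mul_inv,
    mul_assoc]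

theorem rpow_neg_pmeBarrier (hC : 0 < C) (hα : α ≠ 0) (hs : 0 < s + T) (hx : ‖x‖ ^ 2 < M) :
    pmeBarrier C T M α x s ^ (-α) = C ^ (-α) * (M - ‖x‖ ^ 2) / (s + T) := by
  have hG := sub_pos.2 hx
  rw [pmeBarrier, mul_rpow hC.le (by positivity), ← rpow_mul (by positivity),
    show 1 / α * -α = -1 by field_simp, rpow_neg_one, inv_div, mul_div_assoc]

theorem hasDerivAt_pmeBarrier (hs : 0 < t + T) (hx : ‖x‖ ^ 2 < M) :
    HasDerivAt (pmeBarrier C T M α x) (1 / α * (pmeBarrier C T M α x t / (t + T))) t := by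
  have hG := sub_pos.2 hx
  have hbase : HasDerivAt (fun s => (s + T) / (M - ‖x‖ ^ 2)) (1 / (M - ‖x‖ ^ 2)) t :=
    ((hasDerivAt_id t).add_const T).div_const _
  refine ((hbase.rpow_const (p := 1 / α) (Or.inl (by positivity))).const_mul C).congr_deriv ?_
  rw [pmeBarrier, rpow_sub_one (by positivity)]
  field_simp

end Barrier

section Euclidean

variable {n : ℕ} {M : ℝ} {f g : EuclideanSpace ℝ (Fin n) → ℝ} {x : EuclideanSpace ℝ (Fin n)}

theorem HasFDerivAt.pd_eq {f' : EuclideanSpace ℝ (Fin n) →L[ℝ] ℝ} (hf : HasFDerivAt f f' x)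
    (i : Fin n) : pd i f x = f' (EuclideanSpace.single i 1) := by
  rw [pd, hf.fderiv]

theorem Filter.EventuallyEq.pd_eq (h : f =ᶠ[𝓝 x] g) (i : Fin n) : pd i f x = pd i g x := by
  rw [pd, pd, h.fderiv_eq]

theorem pd_rpow_sub_norm_sq_mul_coord {p : ℝ} (c : ℝ) (hx : ‖x‖ ^ 2 < M) (i : Fin n) :
    pd i (fun y => c * ((M - ‖y‖ ^ 2) ^ p * y i)) x
      = c * ((M - ‖x‖ ^ 2) ^ p - 2 * p * (M - ‖x‖ ^ 2) ^ (p - 1) * x i ^ 2) := by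
  have h : HasFDerivAt (fun y => c * ((M - ‖y‖ ^ 2) ^ p * y i)) _ x :=
    ((hasFDerivAt_rpow_sub_norm_sq hx).mul
      (EuclideanSpace.proj (𝕜 := ℝ) i).hasFDerivAt).const_mul c
  rw [h.pd_eq]
  simp [EuclideanSpace.inner_single_right]
  ring

theorem sum_pd_rpow_sub_norm_sq_mul_coord {p : ℝ} (c : ℝ) (hx : ‖x‖ ^ 2 < M) :
    ∑ i, pd i (fun y => c * ((M - ‖y‖ ^ 2) ^ p * y i)) x
      = c * (n * (M - ‖x‖ ^ 2) ^ p - 2 * p * (M - ‖x‖ ^ 2) ^ (p - 1) * ‖x‖ ^ 2) := by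
  rw [Finset.sum_congr rfl fun i _ => pd_rpow_sub_norm_sq_mul_coord c hx i, ← Finset.mul_sum,
    Finset.sum_sub_distrib, ← Finset.mul_sum, ← EuclideanSpace.real_norm_sq_eq]
  simp

variable {C T α t c : ℝ}

theorem pd_pmeBarrier (hs : 0 < t + T) (hx : ‖x‖ ^ 2 < M) (i : Fin n) :
    pd i (fun y => pmeBarrier C T M α y t) x
      = 2 / α * (C * (t + T) ^ (1 / α)) * (M - ‖x‖ ^ 2) ^ (-(1 / α) - 1) * x i := by
  have h : (fun y => pmeBarrier C T M α y t) =ᶠ[𝓝 x]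
      fun y => C * (t + T) ^ (1 / α) * (M - ‖y‖ ^ 2) ^ (-(1 / α)) := by
    filter_upwards [eventually_norm_sq_lt hx] with y hy using pmeBarrier_eq_mul_rpow hs.le hy.le
  rw [h.pd_eq, ((hasFDerivAt_rpow_sub_norm_sq hx).const_mul _).pd_eq]
  simp [EuclideanSpace.inner_single_right]
  ring

theorem pmeBarrier_flux_eventuallyEq (hC : 0 < C) (hα : α ≠ 0) (hs : 0 < t + T) (hx : ‖x‖ ^ 2 < M)
    (i : Fin n) :
    (fun y => c * pmeBarrier C T M α y t ^ (-α) * pd i (fun z => pmeBarrier C T M α z t) y) =ᶠ[𝓝 x]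
      fun y => 2 / α * (c * C ^ (-α)) * (C * (t + T) ^ (1 / α)) / (t + T) *
        ((M - ‖y‖ ^ 2) ^ (-(1 / α)) * y i) := by
  filter_upwards [eventually_norm_sq_lt hx] with y hy
  have hG := (sub_pos.2 hy).ne'
  rw [rpow_neg_pmeBarrier hC hα hs hy, pd_pmeBarrier hs hy, rpow_sub_one hG]
  field_simp

theorem mul_rpow_neg_of_rpow_eq {C d α : ℝ} (hC : 0 < C) (h : C ^ α = 2 * c * d) :
    c * C ^ (-α) = (2 * d)⁻¹ := by
  have hc : c ≠ 0 := by
    rintro rfl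
    have := rpow_pos_of_pos hC α
    simp_all
  rw [rpow_neg hC.le, h]
  field_simp

theorem pmeBarrier_operator_eq (hα : α < 0) (hC : 0 < C) (hCα : C ^ α = 2 * c * (n - 2 / α))
    (hs : 0 < t + T) (hx : ‖x‖ ^ 2 < M) :
    deriv (pmeBarrier C T M α x) t - ∑ i, pd i (fun y => c * pmeBarrier C T M α y t ^ (-α) *
        pd i (fun z => pmeBarrier C T M α z t) y) x
      = 1 / α * (2 / (2 - n * α)) * (M / (M - ‖x‖ ^ 2)) * (pmeBarrier C T M α x t / (t + T)) := by
  have hG := sub_pos.2 hx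
  have hα0 := hα.ne
  have h2nα : 2 - α * n ≠ 0 := by nlinarith [n.cast_nonneg (α := ℝ)]
  have hnα : α * n - 2 ≠ 0 := by nlinarith [n.cast_nonneg (α := ℝ)]
  rw [(hasDerivAt_pmeBarrier hs hx).deriv,
    Finset.sum_congr rfl fun i _ => (pmeBarrier_flux_eventuallyEq hC hα0 hs hx i).pd_eq i,
    sum_pd_rpow_sub_norm_sq_mul_coord _ hx, mul_rpow_neg_of_rpow_eq hC hCα,
    pmeBarrier_eq_mul_rpow hs.le hx.le, rpow_sub_one hG.ne']
  field_simp
  ring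

end Euclidean

theorem pme_barrier_subsolution_general (n : ℕ) (α R T : ℝ)
    (hα : -1 ≤ α ∧ α < 0) (hT : 0 < T)
    (Cα : ℝ) (hCpos : 0 < Cα)
    (hCα : Cα ^ α = 2 * (n : ℝ) ^ (α - 1) * ((n : ℝ) - 2 / α))
    (Ψ : EuclideanSpace ℝ (Fin n) → ℝ → ℝ)
    (hΨ : ∀ x s, Ψ x s = Cα *
      ((s + T) / (R ^ 2 * T ^ (2 / (2 - n * α)) - ‖x‖ ^ 2)) ^ (1 / α)) :
    ∀ (x : EuclideanSpace ℝ (Fin n)) (t : ℝ),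
      ‖x‖ ^ 2 < R ^ 2 * T ^ (2 / (2 - n * α)) → 0 ≤ t →
      (deriv (Ψ x) t -
          ∑ i, pd i (fun y =>
            (n : ℝ) ^ (α - 1) * (Ψ y t) ^ (-α) * pd i (fun z => Ψ z t) y) x =
        (1 / α) * (2 / (2 - n * α)) *
          (R ^ 2 * T ^ (2 / (2 - n * α)) /
            (R ^ 2 * T ^ (2 / (2 - n * α)) - ‖x‖ ^ 2)) * (Ψ x t / (t + T))) ∧
      (deriv (Ψ x) t -
          ∑ i, pd i (fun y =>
            (n : ℝ) ^ (α - 1) * (Ψ y t) ^ (-α) * pd i (fun z => Ψ z t) y) x ≤ 0) := by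
  intro x t hx ht
  obtain rfl : Ψ = pmeBarrier Cα T (R ^ 2 * T ^ (2 / (2 - n * α))) α :=
    funext fun x => funext (hΨ x)
  have hs : 0 < t + T := by linarith
  have key := pmeBarrier_operator_eq hα.2 hCpos hCα hs hx
  refine ⟨key, key ▸ ?_⟩
  have hG := sub_pos.2 hx
  have h2nα : 0 < 2 - n * α := by nlinarith [n.cast_nonneg (α := ℝ)]
  have hΨpos := pmeBarrier_pos hCpos hs hx (α := α)
  rw [mul_assoc, mul_assoc]
  exact mul_nonpos_of_nonpos_of_nonneg (one_div_neg.2 hα.2).le (by positivity)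

/-- Barenblatt-type barrier in the PME range `α ∈ [−1, 0)`, `n ≥ 2`: on the
region `|x|² < R²T^{2/(2−nα)}`, the function
`Ψ(x,t) = C_α ((t+T)/(R²T^{2/(2−nα)}−|x|²))^{1/α}`, with
`C_α^α = 2n^{α−1}(n−2/α)`, satisfies for `t ≥ 0` the identity
`∂_tΨ − ∑_i ∂_{x_i}(n^{α−1}Ψ^{−α}∂_{x_i}Ψ)
  = (1/α)(2/(2−nα))(R²T^{2/(2−nα)}/(R²T^{2/(2−nα)}−|x|²))·Ψ/(t+T)`,
which is `≤ 0` since `α < 0`; i.e. `Ψ` is a subsolution of the porous medium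
equation on the interior of its support. -/
theorem pme_barrier_subsolution (n : ℕ) (hn : 2 ≤ n) (α R T : ℝ)
    (hα : -1 ≤ α ∧ α < 0) (hR : 0 < R) (hT : 0 < T)
    (Cα : ℝ) (hCpos : 0 < Cα)
    (hCα : Cα ^ α = 2 * (n : ℝ) ^ (α - 1) * ((n : ℝ) - 2 / α))
    (Ψ : EuclideanSpace ℝ (Fin n) → ℝ → ℝ)
    (hΨ : ∀ x s, Ψ x s = Cα *
      ((s + T) / (R ^ 2 * T ^ (2 / (2 - n * α)) - ‖x‖ ^ 2)) ^ (1 / α)) :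
    ∀ (x : EuclideanSpace ℝ (Fin n)) (t : ℝ),
      ‖x‖ ^ 2 < R ^ 2 * T ^ (2 / (2 - n * α)) → 0 ≤ t →
      (deriv (Ψ x) t -
          ∑ i, pd i (fun y =>
            (n : ℝ) ^ (α - 1) * (Ψ y t) ^ (-α) * pd i (fun z => Ψ z t) y) x =
        (1 / α) * (2 / (2 - n * α)) *
          (R ^ 2 * T ^ (2 / (2 - n * α)) /
            (R ^ 2 * T ^ (2 / (2 - n * α)) - ‖x‖ ^ 2)) * (Ψ x t / (t + T))) ∧
      (deriv (Ψ x) t -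
          ∑ i, pd i (fun y =>
            (n : ℝ) ^ (α - 1) * (Ψ y t) ^ (-α) * pd i (fun z => Ψ z t) y) x ≤ 0) :=
  pme_barrier_subsolution_general n α R T hα hT Cα hCpos hCα Ψ hΨ
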